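/- arXiv:0904.1149 — 2 statements merged into one kernel-verified Lean document; each statement's English description precedes it below -/
import Mathlib

section
/- Let V be an optimal computer and M a deterministic Turing machine computing V. There exists d ∈ ℕ such that for every p ∈ dom V there exists q ∈ dom V with |q| ≤ |p| + d and the running time of M on input q strictly exceeds the running time of M on input p. -/
open scoped Classical ENNReal

/-- A computer: a partial recursive function on binary strings with prefix-free domain. -/
structure Computer where
  f : List Bool →. List Bool
  partrec : Partrec f
  prefixFree : ∀ p q : List Bool, (f p).Dom → (f q).Dom → p <+: q → p = q

/-- Program-size complexity `H_C(s)` (possibly `∞`). -/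
noncomputable def Computer.H (C : Computer) (s : List Bool) : ℕ∞ :=
  sInf {n : ℕ∞ | ∃ p : List Bool, C.f p = Part.some s ∧ (p.length : ℕ∞) = n}

/-- Optimality: simulation of every computer with constant overhead in program length. -/
def Computer.IsOptimal (U : Computer) : Prop :=
  ∀ C : Computer, ∃ d : ℕ, ∀ p : List Bool, ∀ h : (C.f p).Dom,
    ∃ q : List Bool, U.f q = Part.some ((C.f p).get h) ∧ q.length ≤ p.length + d

/-- The halting probability of a computer. -/
noncomputable def Omega (V : Computer) : ℝ :=
  ∑' p : {p : List Bool // (V.f p).Dom}, ((2 : ℝ) ^ p.val.length)⁻¹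

/-- The first `n` bits of the base-two expansion of `α - ⌊α⌋` (with infinitely many zeros). -/
noncomputable def bits (α : ℝ) (n : ℕ) : List Bool :=
  (List.range n).map (fun i => decide (⌊Int.fract α * 2 ^ (i + 1)⌋ % 2 = 1))

/-- Weak Chaitin randomness relative to an optimal computer `U`:
`∃ c, ∀ n ≥ 1, n - c ≤ H(α ↾ n)`. -/
def WeaklyChaitinRandom (U : Computer) (α : ℝ) : Prop :=
  ∃ c : ℕ, ∀ n : ℕ, 1 ≤ n → (n : ℕ∞) ≤ U.H (bits α n) + c

/-- The standard bijection `ℕ ≃ {0,1}*` (`s ↦ 1s - 1`). -/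
def natToStr (n : ℕ) : List Bool := ((n + 1).bits).dropLast.reverse

/-- Complexity of a natural number. -/
noncomputable def HN (U : Computer) (a : ℕ) : ℕ∞ := U.H (natToStr a)

/-- Complexity of a pair of natural numbers (via a fixed recursive bijective pairing). -/
noncomputable def HPairN (U : Computer) (a b : ℕ) : ℕ∞ := U.H (natToStr (Nat.pair a b))

/-- All binary strings of length exactly `n`, in a canonical order. -/
def allOfLength : ℕ → List (List Bool)
  | 0 => [[]]
  | n + 1 => (allOfLength n).flatMap (fun l => [false :: l, true :: l])

/-- All binary strings of length at most `n`, in a canonical order. -/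
def allUpTo (n : ℕ) : List (List Bool) :=
  (List.range (n + 1)).flatMap allOfLength

/-- The canonical encoding (as a list) of `S ↾ n = {s ∈ S : |s| ≤ n}`. -/
noncomputable def restrictList (S : Set (List Bool)) (n : ℕ) : List (List Bool) :=
  (allUpTo n).filter (fun p => decide (p ∈ S))

/-- The domain (halting set) of a computer. -/
def domSet (V : Computer) : Set (List Bool) := {p | (V.f p).Dom}

/-- `Σ_{n=1}^∞ 2^{-f(n)}` (computed in `ℝ≥0∞`); here `f (n+1)` plays the role of `f(n)`,
`f` being a function on positive integers. -/
noncomputable def kraftSum (f : ℕ → ℕ) : ℝ≥0∞ :=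
  ∑' n : ℕ, ((2 : ℝ≥0∞) ^ f (n + 1))⁻¹

/-- A left-computable (r.e.) real. -/
def REReal (α : ℝ) : Prop :=
  ∃ g : ℕ → ℚ, Computable g ∧ (∀ n, (g n : ℝ) ≤ α) ∧
    Filter.Tendsto (fun n => (g n : ℝ)) Filter.atTop (nhds α)

/-- The term `2^{n - H(α ↾ n)}` (zero when `H(α ↾ n) = ∞`). -/
noncomputable def excessTerm (U : Computer) (α : ℝ) (n : ℕ) : ℝ :=
  WithTop.recTopCoe 0 (fun h : ℕ => (2 : ℝ) ^ ((n : ℤ) - h)) (U.H (bits α n))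

/-- The running time of the machine (code) `c` on input `p` (number of steps to halt). -/
noncomputable def runtime (c : Nat.Partrec.Code) (p : List Bool) : ℕ :=
  sInf {k : ℕ | (Nat.Partrec.Code.evaln k c (Encodable.encode p)).isSome = true}

/-- The deterministic machine (code) `c` computes the computer `V`. -/
def ComputesVia (c : Nat.Partrec.Code) (V : Computer) : Prop :=
  ∀ p : List Bool, c.eval (Encodable.encode p) = (V.f p).map Encodable.encode

/-- `T^M_n`: the maximum running time on halting inputs of length at most `n`. -/
noncomputable def maxTime (c : Nat.Partrec.Code) (V : Computer) (n : ℕ) : ℕ :=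
  sSup {t : ℕ | ∃ p : List Bool, (V.f p).Dom ∧ p.length ≤ n ∧ runtime c p = t}

/-- `L_M`: the minimum length of a halting input. -/
noncomputable def minLen (V : Computer) : ℕ :=
  sInf {k : ℕ | ∃ p : List Bool, (V.f p).Dom ∧ p.length = k}

/-
Diagonalisation against the clock. The computer that, on input `1^k 0 p` with `p ∈ dom V`, waits
the `t = runtime c p` steps `c` takes on `p` and then prints a string longer than every output `c`
produces within `t` steps on inputs of length at most `2 (k + 1 + |p|)` has prefix-free domain
because `dom V` has. Optimality of `V` simulates it with some overhead `d`; for `k = d` the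
simulating program `q` has length at most `|p| + 2d + 1`, inside the enumerated range, so `c` cannot
halt on `q` within `t` steps.
-/

open Encodable Nat.Partrec

theorem List.cons_flatten_notMem {α : Type*} (a : α) (L : List (List α)) :
    a :: L.flatten ∉ L :=
  fun h => by simpa using (List.sublist_flatten_of_mem h).length_le

theorem mem_allOfLength (q : List Bool) : q ∈ allOfLength q.length := by
  induction q with
  | nil => simp [allOfLength]
  | cons a q ih => cases a <;> exact List.mem_flatMap.2 ⟨q, ih, by simp⟩

theorem mem_allUpTo {q : List Bool} {n : ℕ} (h : q.length ≤ n) : q ∈ allUpTo n :=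
  List.mem_flatMap.2 ⟨q.length, List.mem_range.2 (Nat.lt_succ_of_le h), mem_allOfLength q⟩

theorem primrec_allOfLength : Primrec allOfLength :=
  have extend : Primrec₂ fun (_ : ℕ × List (List Bool)) (l : List Bool) =>
      [false :: l, true :: l] :=
    (Primrec.list_cons.comp (Primrec.list_cons.comp (Primrec.const false) Primrec.snd)
      (Primrec.list_cons.comp (Primrec.list_cons.comp (Primrec.const true) Primrec.snd)
        (Primrec.const []))).to₂
  (Primrec.nat_rec₁ [[]] (Primrec.list_flatMap Primrec.snd extend).to₂).of_eq fun n => by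
    induction n with
    | zero => rfl
    | succ n ih => simp only [allOfLength, ← ih]

theorem primrec_allUpTo : Primrec allUpTo :=
  Primrec.list_flatMap (Primrec.list_range.comp Primrec.succ)
    (primrec_allOfLength.comp Primrec.snd).to₂

def unpad : List Bool → Option (List Bool)
  | [] => none
  | true :: s => unpad s
  | false :: s => some s

theorem unpad_replicate_append (k : ℕ) (p : List Bool) :
    unpad (List.replicate k true ++ false :: p) = some p := by
  induction k with
  | zero => rfl
  | succ k ih => exact ih

theorem unpad_append {s p : List Bool} (h : unpad s = some p) (r : List Bool) :
    unpad (s ++ r) = some (p ++ r) := by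
  induction s with
  | nil => cases h
  | cons a s ih => cases a <;> simp_all [unpad]

theorem primrec_unpad : Primrec unpad :=
  (Primrec.list_rec Primrec.id (Primrec.const none)
    (Primrec.cond (Primrec.fst.comp Primrec.snd) (Primrec.snd.comp (Primrec.snd.comp Primrec.snd))
      (Primrec.option_some.comp (Primrec.fst.comp (Primrec.snd.comp Primrec.snd)))).to₂).of_eq
    fun s => by
      induction s with
      | nil => rfl
      | cons a s ih => cases a <;> simp_all [unpad]

theorem runtime_mem_rfind {c : Code} {x : List Bool} (h : (c.eval (encode x)).Dom) :
    runtime c x ∈ Nat.rfind fun k => Part.some (Code.evaln k c (encode x)).isSome := by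
  obtain ⟨v, hv⟩ := Part.dom_iff_mem.1 h
  obtain ⟨k, hk⟩ := Code.evaln_complete.1 hv
  have hne : {k | (Code.evaln k c (encode x)).isSome = true}.Nonempty :=
    ⟨k, Option.isSome_iff_exists.2 ⟨v, hk⟩⟩
  refine Nat.mem_rfind.2 ⟨by simpa [runtime] using Nat.sInf_mem hne, fun hm => ?_⟩
  simpa using Nat.notMem_of_lt_sInf hm

theorem mem_evaln_of_runtime_le {c : Code} {x : List Bool} {t v : ℕ}
    (hv : v ∈ c.eval (encode x)) (ht : runtime c x ≤ t) : v ∈ Code.evaln t c (encode x) := by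
  have halt := Nat.rfind_spec (runtime_mem_rfind (Part.dom_iff_mem.2 ⟨v, hv⟩))
  obtain ⟨w, hw⟩ := Option.isSome_iff_exists.1 (by simpa using halt)
  obtain rfl : w = v := Part.mem_unique (Code.evaln_sound hw) hv
  exact Code.evaln_mono ht hw

def fastOutputs (c : Code) (t n : ℕ) : List (List Bool) :=
  (allUpTo n).filterMap fun q => (Code.evaln t c (encode q)).bind decode

theorem mem_fastOutputs {c : Code} {t n : ℕ} {q x : List Bool} (hq : q.length ≤ n)
    (hx : encode x ∈ Code.evaln t c (encode q)) : x ∈ fastOutputs c t n :=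
  List.mem_filterMap.2 ⟨q, mem_allUpTo hq, by simp [Option.mem_def.1 hx]⟩

theorem primrec_fastOutputs (c : Code) : Primrec₂ (fastOutputs c) :=
  Primrec.listFilterMap (primrec_allUpTo.comp Primrec.snd)
    (Primrec.option_bind
      (Code.primrec_evaln.comp (((Primrec.fst.comp Primrec.fst).pair (Primrec.const c)).pair
        (Primrec.encode.comp Primrec.snd)))
      (Primrec.decode.comp Primrec.snd).to₂).to₂

def diagonal (c : Code) (s : List Bool) : Part (List Bool) :=
  (unpad s : Part (List Bool)).bind fun p =>
    (Nat.rfind fun k => Part.some (Code.evaln k c (encode p)).isSome).map fun t =>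
      false :: (fastOutputs c t (2 * s.length)).flatten

theorem partrec_diagonal (c : Code) : Partrec (diagonal c) := by
  have halts : Computable₂ fun (a : List Bool × List Bool) (k : ℕ) =>
      (Code.evaln k c (encode a.2)).isSome :=
    (Primrec.option_isSome.comp (Code.primrec_evaln.comp
      ((Primrec.snd.pair (Primrec.const c)).pair
        (Primrec.encode.comp (Primrec.snd.comp Primrec.fst))))).to_comp.to₂
  have output : Computable₂ fun (a : List Bool × List Bool) (t : ℕ) =>
      false :: (fastOutputs c t (2 * a.1.length)).flatten :=
    (Primrec.list_cons.comp (Primrec.const false) (Primrec.list_flatten.comp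
      ((primrec_fastOutputs c).comp Primrec.snd (Primrec.nat_mul.comp (Primrec.const 2)
        (Primrec.list_length.comp (Primrec.fst.comp Primrec.fst)))))).to_comp.to₂
  exact (Computable.ofOption primrec_unpad.to_comp).bind
    ((Partrec.rfind halts.partrec₂).map output).to₂

theorem diagonal_of_unpad {c : Code} {s p : List Bool} (hs : unpad s = some p)
    (hp : (c.eval (encode p)).Dom) :
    diagonal c s = Part.some (false :: (fastOutputs c (runtime c p) (2 * s.length)).flatten) :=
  Part.eq_some_iff.2 <| by
    simp only [diagonal, hs, Part.coe_some, Part.bind_some]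
    exact Part.mem_map _ (runtime_mem_rfind hp)

theorem exists_unpad_of_diagonal_dom {c : Code} {s : List Bool} (h : (diagonal c s).Dom) :
    ∃ p, unpad s = some p ∧ (c.eval (encode p)).Dom := by
  obtain ⟨x, hx⟩ := Part.dom_iff_mem.1 h
  simp only [diagonal, Part.mem_bind_iff, Part.mem_map_iff] at hx
  obtain ⟨p, hp, t, ht, -⟩ := hx
  obtain ⟨v, hv⟩ := Option.isSome_iff_exists.1 (by simpa using Nat.rfind_spec ht)
  exact ⟨p, Part.mem_coe.1 hp, Part.dom_iff_mem.2 ⟨v, Code.evaln_sound hv⟩⟩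

theorem ComputesVia.eval_dom_iff {c : Code} {V : Computer} (hc : ComputesVia c V)
    (p : List Bool) : (c.eval (encode p)).Dom ↔ (V.f p).Dom := by
  rw [hc p]; rfl

def diagonalComputer (V : Computer) (c : Code) (hc : ComputesVia c V) : Computer where
  f := diagonal c
  partrec := partrec_diagonal c
  prefixFree := by
    rintro s _ hs hs' ⟨r, rfl⟩
    obtain ⟨p, hsp, hp⟩ := exists_unpad_of_diagonal_dom hs
    obtain ⟨p', hsp', hp'⟩ := exists_unpad_of_diagonal_dom hs'
    obtain rfl : p ++ r = p' := Option.some.inj ((unpad_append hsp r).symm.trans hsp')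
    have hpr := V.prefixFree _ _ ((hc.eval_dom_iff _).1 hp) ((hc.eval_dom_iff _).1 hp')
      (List.prefix_append p r)
    obtain rfl : r = [] := by simpa using hpr.symm
    exact (List.append_nil s).symm

theorem stmt_17 (V : Computer) (hV : V.IsOptimal)
    (c : Nat.Partrec.Code) (hc : ComputesVia c V) :
    ∃ d : ℕ, ∀ p : List Bool, (V.f p).Dom →
      ∃ q : List Bool, (V.f q).Dom ∧ q.length ≤ p.length + d ∧
        runtime c p < runtime c q := by
  obtain ⟨d, hd⟩ := hV (diagonalComputer V c hc)
  refine ⟨2 * d + 1, fun p hp => ?_⟩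
  set s := List.replicate d true ++ false :: p
  set x := false :: (fastOutputs c (runtime c p) (2 * s.length)).flatten
  have hs : diagonal c s = Part.some x :=
    diagonal_of_unpad (unpad_replicate_append d p) ((hc.eval_dom_iff p).2 hp)
  obtain ⟨q, hq, hqs⟩ := hd s (by simp [diagonalComputer, hs])
  have hqx : V.f q = Part.some x := by simpa [diagonalComputer, hs] using hq
  have hslen : s.length = d + 1 + p.length := by simp [s]; omega
  refine ⟨q, by simp [hqx], by omega, lt_of_not_ge fun hle => ?_⟩
  have hx : encode x ∈ c.eval (encode q) := by simp [hc q, hqx]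
  exact List.cons_flatten_notMem _ _
    (mem_fastOutputs (by omega) (mem_evaln_of_runtime_le hx hle))
end

section
/- For every total recursive function f : ℕ⁺ → ℕ that is unbounded, H(n) ≤ f(n) holds for infinitely many n ∈ ℕ⁺. -/
open scoped Classical ENNReal

/-!
On the unary program `0ᵏ1`, let a computer output the least `n ≥ 1` with `f n > 2k`; such `n`
exists because `f` is unbounded, and the search is computable because `f` is. If `U` simulates
this computer with overhead `d`, then `H(n) ≤ k + 1 + d ≤ 2k < f n` as soon as `k > d`, and
choosing `k` also above `f 0, …, f (N - 1)` forces `n ≥ N`.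
-/

theorem Primrec.nat_bits : Primrec Nat.bits := by
  let g : Unit → List (List Bool) → Option (List Bool) := fun _ l =>
    some (if l.length = 0 then [] else decide (l.length % 2 = 1) :: l.getD (l.length / 2) [])
  have hg : Primrec₂ g := by
    have hlen : Primrec fun a : Unit × List (List Bool) => a.2.length :=
      list_length.comp snd
    refine option_some.comp (ite (Primrec.eq.comp hlen (const 0)) (const []) ?_)
    exact list_cons.comp (Primrec.eq.comp (nat_mod.comp hlen (const 2)) (const 1)).decide
      ((list_getD []).comp snd (nat_div.comp hlen (const 2)))
  have h := nat_strong_rec (fun (_ : Unit) n => n.bits) hg fun _ n => ?_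
  · exact Primrec₂.comp (f := fun (_ : Unit) (n : ℕ) => n.bits) (g := fun _ => ()) (h := id) h
      (const ()) Primrec.id
  rcases Nat.eq_zero_or_pos n with rfl | hn
  · simp [g]
  · have hhalf : n / 2 < n := Nat.div_lt_self hn (by norm_num)
    simp only [g, List.length_map, List.length_range, hn.ne', if_false, Option.some.injEq]
    rw [List.getD_eq_getElem _ _ (by simpa using hhalf), List.getElem_map, List.getElem_range]
    rcases Nat.even_or_odd' n with ⟨m, rfl | rfl⟩
    · rw [Nat.bit0_bits m (by omega)]
      simp
    · rw [Nat.bit1_bits]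
      simp [show (2 * m + 1) / 2 = m by omega]

theorem primrec_natToStr : Primrec natToStr :=
  ((Primrec.list_tail (α := Bool)).comp <| Primrec.list_reverse.comp <|
    Primrec.nat_bits.comp (Primrec.succ : Primrec (· + 1 : ℕ → ℕ))).of_eq
    fun n => by simp [natToStr, List.tail_reverse]

def unary (k : ℕ) : List Bool := List.replicate k false ++ [true]

@[simp]
theorem length_unary (k : ℕ) : (unary k).length = k + 1 := by simp [unary]

theorem unary_prefix_unary : ∀ {j k : ℕ}, unary j <+: unary k → j = k
  | 0, 0, _ => rfl
  | 0, _ + 1, h => by simp [unary, List.replicate_succ] at h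
  | _ + 1, 0, h => by simp [unary, List.replicate_succ] at h
  | _ + 1, _ + 1, h => by
    rw [unary, unary, List.replicate_succ, List.replicate_succ] at h
    exact congrArg (· + 1) (unary_prefix_unary (List.cons_prefix_cons.mp h).2)

def decodeUnary (p : List Bool) : Option ℕ :=
  if p = unary (p.length - 1) then some (p.length - 1) else none

theorem decodeUnary_eq_some {p : List Bool} {k : ℕ} : decodeUnary p = some k ↔ p = unary k := by
  unfold decodeUnary
  split_ifs with h
  · refine ⟨fun hk => ?_, fun hp => ?_⟩
    · rwa [← Option.some_inj.mp hk]
    · simp [hp]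
  · refine ⟨fun hk => by simp at hk, fun hp => ?_⟩
    exact h (by simp [hp])

theorem primrec_decodeUnary : Primrec decodeUnary := by
  have hk : Primrec fun p : List Bool => p.length - 1 := Primrec.pred.comp Primrec.list_length
  have hunary : Primrec unary :=
    (Primrec.nat_rec₁ (f := fun _ l => false :: l) [true]
      (Primrec.list_cons.comp (Primrec.const false) Primrec.snd).to₂).of_eq
      fun k => by induction k <;> simp_all [unary, List.replicate_succ]
  exact Primrec.ite (Primrec.eq.comp Primrec.id (hunary.comp hk)) (Primrec.option_some.comp hk)
    (Primrec.const none)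

namespace Computer

def ofUnary (g : ℕ →. List Bool) (hg : Partrec g) : Computer where
  f p := (decodeUnary p : Part ℕ).bind g
  partrec := (Computable.ofOption primrec_decodeUnary.to_comp).bind (hg.comp Computable.snd)
  prefixFree p q hp hq hpq := by
    have unary_of_dom : ∀ r, ((decodeUnary r : Part ℕ).bind g).Dom → ∃ k, r = unary k := by
      intro r hr
      cases hk : decodeUnary r with
      | none => simp only [hk, Part.coe_none] at hr; exact (Part.bind_none g ▸ hr).elim
      | some k => exact ⟨k, decodeUnary_eq_some.mp hk⟩
    obtain ⟨j, rfl⟩ := unary_of_dom p hp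
    obtain ⟨k, rfl⟩ := unary_of_dom q hq
    rw [unary_prefix_unary hpq]

theorem ofUnary_unary (g : ℕ →. List Bool) (hg : Partrec g) (k : ℕ) :
    (ofUnary g hg).f (unary k) = g k := by
  simp only [ofUnary, decodeUnary_eq_some.mpr rfl, Part.coe_some]
  exact Part.bind_some k g

theorem H_le_length {C : Computer} {p s : List Bool} (h : C.f p = Part.some s) :
    C.H s ≤ p.length :=
  sInf_le ⟨p, h, rfl⟩

theorem IsOptimal.exists_H_le {U : Computer} (hU : U.IsOptimal) {g : ℕ →. List Bool}
    (hg : Partrec g) : ∃ d : ℕ, ∀ k s, s ∈ g k → U.H s ≤ (k + 1 + d : ℕ) := by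
  obtain ⟨d, hd⟩ := hU (ofUnary g hg)
  refine ⟨d, fun k s hs => ?_⟩
  have hrun : (ofUnary g hg).f (unary k) = Part.some s := by
    rw [ofUnary_unary]; exact Part.eq_some_iff.mpr hs
  obtain ⟨q, hq, hlen⟩ := hd (unary k) (by simp [hrun])
  calc U.H s ≤ q.length := H_le_length (by simpa [hrun] using hq)
    _ ≤ (k + 1 + d : ℕ) := by rw [length_unary] at hlen; exact_mod_cast hlen

end Computer

def firstExceeding (f : ℕ → ℕ) : ℕ →. ℕ := fun B =>
  Nat.rfind (PFun.lift fun n => decide (1 ≤ n ∧ B < f n))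

theorem partrec_firstExceeding {f : ℕ → ℕ} (hf : Computable f) : Partrec (firstExceeding f) := by
  have hpos : Computable fun a : ℕ × ℕ => decide (1 ≤ a.2) :=
    (Primrec.nat_le.comp (Primrec.const 1) Primrec.snd).decide.to_comp
  have hexceeds : Computable fun a : ℕ × ℕ => decide (a.1 < f a.2) :=
    Primrec.nat_lt.decide.to_comp.comp Computable.fst (hf.comp Computable.snd)
  refine Partrec.rfind (Computable₂.partrec₂ ?_)
  exact (Primrec.and.to_comp.comp hpos hexceeds).of_eq fun a => by simp [Bool.decide_and]

theorem exists_mem_firstExceeding {f : ℕ → ℕ} {B : ℕ} (h : ∃ n, 1 ≤ n ∧ B < f n) :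
    ∃ n ∈ firstExceeding f B, 1 ≤ n ∧ B < f n := by
  obtain ⟨m, hm⟩ := h
  obtain ⟨n, hn, -⟩ := Nat.rfind_min' (p := fun n => decide (1 ≤ n ∧ B < f n)) (by simpa using hm)
  exact ⟨n, hn, by simpa using Part.mem_some_iff.mp (Nat.rfind_spec hn)⟩

theorem stmt_18 (U : Computer) (hU : U.IsOptimal) (f : ℕ → ℕ) (hf : Computable f)
    (hub : ∀ B : ℕ, ∃ n : ℕ, 1 ≤ n ∧ B < f n) :
    ∀ N : ℕ, ∃ n : ℕ, N ≤ n ∧ 1 ≤ n ∧ HN U n ≤ (f n : ℕ∞) := by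
  intro N
  have hsearch : Partrec fun k => (firstExceeding f (2 * k)).map natToStr :=
    ((partrec_firstExceeding hf).comp
      (Primrec.nat_mul.comp (Primrec.const 2) Primrec.id).to_comp).map
        (primrec_natToStr.to_comp.comp Computable.snd).to₂
  obtain ⟨d, hd⟩ := hU.exists_H_le hsearch
  set k := (Finset.range N).sup f + d + 1
  obtain ⟨n, hn, hpos, hexceeds⟩ := exists_mem_firstExceeding (hub (2 * k))
  refine ⟨n, ?_, hpos, ?_⟩
  · by_contra! hlt
    have hle := Finset.le_sup (f := f) (Finset.mem_range.mpr hlt)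
    omega
  · calc HN U n ≤ (k + 1 + d : ℕ) := hd k _ (Part.mem_map natToStr hn)
      _ ≤ f n := by exact_mod_cast (by omega : k + 1 + d ≤ f n)
end
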